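/- For every κ ∈ (0, e^{−2}), the point h = 1/2 is a strict local minimum of the function h ↦ s_{1/2,κ}(h); in particular, h = 1/2 is not a maximizer of s_{1/2,κ} on [0,1]. -/

import Mathlib

noncomputable def s (m κ h : ℝ) : ℝ := m * κ ^ ((1 - h) ^ 2) + (1 - m) * κ ^ (h ^ 2)

/-!
Write `L = log κ` and `h = 1/2 + x`. Then `s_{1/2,κ}(h) = κ^{1/4} · e^{L x²} · cosh (L x)`, so the
claim is `e^{L x²} cosh (L x) > 1` for small `x ≠ 0`. With `e^t ≥ 1 + t` and `cosh y ≥ 1 + y²/2`,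
the product is at least `1 + (L x² / 2) (L + 2 + L² x²)`, which exceeds `1` as soon as
`L + 2 + L² x² < 0`; at `x = 0` this is exactly `κ < e^{-2}`.
-/

open Real Filter Topology

lemma sq_le_sinh_sq (x : ℝ) : x ^ 2 ≤ sinh x ^ 2 := by
  rw [← sq_abs x, ← sq_abs (sinh x), abs_sinh]
  exact pow_le_pow_left₀ (abs_nonneg x) (self_le_sinh_iff.2 (abs_nonneg x)) 2

lemma one_add_sq_div_two_le_cosh (x : ℝ) : 1 + x ^ 2 / 2 ≤ cosh x := by
  have hhalf : cosh x = 1 + 2 * sinh (x / 2) ^ 2 := by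
    have hdouble := cosh_two_mul (x / 2)
    rw [mul_div_cancel₀ x two_ne_zero, cosh_sq] at hdouble
    linarith
  nlinarith [sq_le_sinh_sq (x / 2)]

lemma one_lt_exp_mul_sq_mul_cosh {L x : ℝ} (hx : x ≠ 0) (h : L + 2 + L ^ 2 * x ^ 2 < 0) :
    1 < exp (L * x ^ 2) * cosh (L * x) := by
  have hx2 : 0 < x ^ 2 := by positivity
  have hLx2 : L * x ^ 2 < 0 := mul_neg_of_neg_of_pos (by nlinarith [sq_nonneg (L * x)]) hx2
  have hpos : 0 < 1 + L * x ^ 2 := by nlinarith [mul_lt_mul_of_pos_right h hx2]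
  calc 1 < (1 + L * x ^ 2) * (1 + (L * x) ^ 2 / 2) := by nlinarith [mul_pos_of_neg_of_neg hLx2 h]
    _ ≤ exp (L * x ^ 2) * cosh (L * x) :=
      mul_le_mul (by linarith [add_one_le_exp (L * x ^ 2)]) (one_add_sq_div_two_le_cosh _)
        (by positivity) (exp_pos _).le

lemma s_half_eq_exp_mul_cosh {κ : ℝ} (hκ : 0 < κ) (h : ℝ) :
    s (1 / 2) κ h =
      exp (log κ / 4) * (exp (log κ * (h - 1 / 2) ^ 2) * cosh (log κ * (h - 1 / 2))) := by
  simp only [s, rpow_def_of_pos hκ, cosh_eq, mul_add, mul_div, ← exp_add]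
  ring_nf

lemma not_isMaxOn_of_eventually_lt {X β : Type*} [TopologicalSpace X] [LinearOrder β]
    {f : X → β} {s : Set X} {a : X} [(𝓝[≠] a).NeBot] (hs : s ∈ 𝓝 a)
    (h : ∀ᶠ x in 𝓝[≠] a, f a < f x) : ¬ IsMaxOn f s a := fun hmax =>
  let ⟨_, hlt, hx⟩ := (h.and (mem_nhdsWithin_of_mem_nhds hs)).exists
  (hmax hx).not_gt hlt

theorem half_is_strict_local_min (κ : ℝ) (hκ : κ ∈ Set.Ioo 0 (Real.exp (-2))) :
    (∀ᶠ h in nhdsWithin (1 / 2 : ℝ) {(1 / 2 : ℝ)}ᶜ,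
      s (1 / 2) κ (1 / 2) < s (1 / 2) κ h) ∧
    ¬ IsMaxOn (s (1 / 2) κ) (Set.Icc 0 1) (1 / 2) := by
  obtain ⟨hκ0, hκe⟩ := hκ
  have hL : log κ + 2 < 0 := by linarith [(log_lt_iff_lt_exp hκ0).2 hκe]
  have hnear : ∀ᶠ h in 𝓝 (1 / 2 : ℝ), log κ + 2 + log κ ^ 2 * (h - 1 / 2) ^ 2 < 0 := by
    have hcont : Continuous fun h : ℝ ↦ log κ + 2 + log κ ^ 2 * (h - 1 / 2) ^ 2 := by fun_prop
    exact (hcont.tendsto (1 / 2)).eventually (eventually_lt_nhds (by simpa using hL))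
  have hmin : ∀ᶠ h in 𝓝[≠] (1 / 2 : ℝ), s (1 / 2) κ (1 / 2) < s (1 / 2) κ h := by
    filter_upwards [nhdsWithin_le_nhds hnear, self_mem_nhdsWithin] with h hh hne
    rw [s_half_eq_exp_mul_cosh hκ0, s_half_eq_exp_mul_cosh hκ0]
    simpa [lt_mul_iff_one_lt_right (exp_pos _)] using
      one_lt_exp_mul_sq_mul_cosh (sub_ne_zero.2 hne) hh
  exact ⟨hmin, not_isMaxOn_of_eventually_lt (Icc_mem_nhds (by norm_num) (by norm_num)) hmin⟩
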